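/- arXiv:2312.16341 — 2 statements merged into one kernel-verified Lean document; each statement's English description precedes it below -/
import Mathlib

section
/- Let p be the IGW distribution with parameter γ over K actions based on f̂, and let Q be any probability distribution over deterministic policies π : X → A inducing p (i.e., p(a|x) = Σ_π 1{π(x)=a} Q(π)). Then the Q-average of the estimated regret satisfies Σ_π Q(π)·E_x[f̂(x, π̂(x)) − f̂(x, π(x))] ≤ K/γ, where π̂(x) = argmax_a f̂(x,a). -/
/-- If `Q` is a distribution over deterministic policies inducing the
contextual IGW kernel `p` with parameter `γ` over `K` actions based on `f̂`, then
`Σ_π Q(π)·E_x[f̂(x, π̂(x)) − f̂(x, π(x))] ≤ K/γ`, where `π̂(x) = argmax_a f̂(x,a)`. -/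
theorem stmt4 {X A : Type*} [Fintype X] [Fintype A] [DecidableEq X] [DecidableEq A]
    [Nonempty A]
    (K : ℕ) (hK : K = Fintype.card A)
    (fhat : X → A → ℝ) (γ : ℝ) (hγ : 0 < γ)
    (ahat : X → A) (hahat : ∀ x a, fhat x a ≤ fhat x (ahat x))
    (p : X → A → ℝ)
    (hp_ne : ∀ x a, a ≠ ahat x →
      p x a = 1 / ((K : ℝ) + γ * (fhat x (ahat x) - fhat x a)))
    (hp_hat : ∀ x, p x (ahat x) = 1 - ∑ a ∈ Finset.univ.erase (ahat x), p x a)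
    (D : X → ℝ) (hD0 : ∀ x, 0 ≤ D x) (hD1 : ∑ x, D x = 1)
    (Q : (X → A) → ℝ) (hQ0 : ∀ π, 0 ≤ Q π) (hQ1 : ∑ π, Q π = 1)
    (hQp : ∀ x a, (∑ π, if π x = a then Q π else 0) = p x a) :
    ∑ π, Q π * (∑ x, D x * (fhat x (ahat x) - fhat x (π x))) ≤ (K : ℝ) / γ := by
  have hKpos : (0:ℝ) < K := by
    have := Fintype.card_pos (α := A)
    rw [hK]; exact_mod_cast this
  set g : X → A → ℝ := fun x a => fhat x (ahat x) - fhat x a with hg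
  have key : ∀ x, ∑ a, p x a * g x a ≤ (K : ℝ) / γ := by
    intro x
    rw [← Finset.add_sum_erase _ _ (Finset.mem_univ (ahat x))]
    have h0 : g x (ahat x) = 0 := by simp [hg]
    rw [h0, mul_zero, zero_add]
    calc ∑ a ∈ Finset.univ.erase (ahat x), p x a * g x a
        ≤ ∑ a ∈ Finset.univ.erase (ahat x), 1 / γ := by
          apply Finset.sum_le_sum
          intro a ha
          have hane : a ≠ ahat x := Finset.ne_of_mem_erase ha
          have hgnn : 0 ≤ g x a := sub_nonneg.mpr (hahat x a)
          have hden : 0 < (K : ℝ) + γ * g x a := by positivity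
          rw [hp_ne x a hane, div_mul_eq_mul_div, one_mul, div_le_div_iff₀ hden hγ]
          nlinarith
      _ ≤ ∑ _a : A, 1 / γ := by
          apply Finset.sum_le_sum_of_subset_of_nonneg (Finset.erase_subset _ _)
          intro a _ _; positivity
      _ = (K : ℝ) / γ := by
          rw [Finset.sum_const, Finset.card_univ, nsmul_eq_mul, hK]
          ring
  have swap : ∀ x, (∑ π : X → A, Q π * g x (π x)) = ∑ a, p x a * g x a := by
    intro x
    have : ∀ a, p x a * g x a = ∑ π : X → A, (if π x = a then Q π * g x (π x) else 0) := by
      intro a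
      rw [← hQp x a, Finset.sum_mul]
      apply Finset.sum_congr rfl
      intro π _
      by_cases h : π x = a <;> simp [h]
    simp_rw [this]
    rw [Finset.sum_comm]
    apply Finset.sum_congr rfl
    intro π _
    simp
  calc ∑ π, Q π * (∑ x, D x * g x (π x))
      = ∑ x, D x * ∑ π : X → A, Q π * g x (π x) := by
        simp_rw [Finset.mul_sum]
        rw [Finset.sum_comm]
        apply Finset.sum_congr rfl
        intro x _
        apply Finset.sum_congr rfl
        intro π _
        ring
    _ ≤ ∑ x, D x * ((K : ℝ) / γ) := by
        apply Finset.sum_le_sum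
        intro x _
        exact mul_le_mul_of_nonneg_left (by rw [swap x]; exact key x) (hD0 x)
    _ = (K : ℝ) / γ := by rw [← Finset.sum_mul, hD1, one_mul]
end

section
/- Let F be a finite class of functions f : X × A → [0,1] containing f*, where E[r(a)|x] = f*(x,a) and rewards lie in [0,1]. Given n i.i.d. samples (x_i, a_i, r_i) with a_i drawn from an arbitrary kernel conditionally independent of r_i given x_i, let f̂ = argmin_{f∈F} Σ_i (f(x_i,a_i) − r_i)². Then with probability at least 1 − δ, E_{x,a}[(f̂(x,a) − f*(x,a))²] ≤ 25·log(|F|/δ)/n. -/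
/-!
For a fixed `g`, the excess loss `L_g = (g - r)² - (f* - r)²` lies in `[-1, 1]`, has mean
`‖g - f*‖²` (realizability kills the cross term) and second moment at most four times that mean.
A Chernoff bound then makes the event `∑ᵢ L_g(zᵢ) ≤ 0` have probability at most
`exp (-n ‖g - f*‖² / 16)`, which is at most `δ / |F|` as soon as `n ‖g - f*‖² > 25 log (|F| / δ)`.
The empirical minimizer always satisfies `∑ᵢ L_f̂(zᵢ) ≤ 0`, so a union bound over `F` concludes.
-/

open Finset Real

section IndependentDraws

variable {T : Type*} {p : T → ℝ} {n : ℕ}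

def piProb (p : T → ℝ) (n : ℕ) (E : Finset (Fin n → T)) : ℝ :=
  ∑ s ∈ E, ∏ i, p (s i)

lemma piProb_filter_eq_one_sub [Fintype T] (hp1 : ∑ z, p z = 1) (P : (Fin n → T) → Prop)
    [DecidablePred P] :
    piProb p n {s | P s} = 1 - piProb p n {s | ¬ P s} := by
  have huniv : piProb p n univ = 1 := by rw [piProb, ← Fintype.sum_pow, hp1, one_pow]
  rw [← huniv, piProb, piProb, piProb, ← sum_filter_add_sum_filter_not univ P]
  ring

lemma piProb_le_card_mul {ι : Type*} [Fintype ι] (hp0 : ∀ z, 0 ≤ p z)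
    (E : Finset (Fin n → T)) (c : (Fin n → T) → ι) (B : ι → Finset (Fin n → T)) {ε : ℝ}
    (hB : ∀ s ∈ E, s ∈ B (c s)) (hε : ∀ s ∈ E, piProb p n (B (c s)) ≤ ε) (hε0 : 0 ≤ ε) :
    piProb p n E ≤ Fintype.card ι * ε := by
  classical
  calc piProb p n E = ∑ i ∈ E.image c, ∑ s ∈ E with c s = i, ∏ j, p (s j) :=
        (sum_fiberwise_of_maps_to (fun s hs => mem_image_of_mem c hs) _).symm
    _ ≤ ∑ i ∈ E.image c, ε := by
        refine sum_le_sum fun i hi => ?_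
        obtain ⟨s, hs, rfl⟩ := mem_image.1 hi
        refine le_trans (sum_le_sum_of_subset_of_nonneg ?_ ?_) (hε s hs)
        · intro s' hs'
          obtain ⟨hs'E, hcs'⟩ := mem_filter.1 hs'
          exact hcs' ▸ hB s' hs'E
        · exact fun s' _ _ => prod_nonneg fun j _ => hp0 _
    _ ≤ Fintype.card ι * ε := by
        rw [sum_const, nsmul_eq_mul]
        gcongr
        exact_mod_cast card_le_univ _

lemma piProb_sum_nonpos_le_pow [Fintype T] (hp0 : ∀ z, 0 ≤ p z) (Y : T → ℝ) {t : ℝ}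
    (ht : 0 ≤ t) :
    piProb p n {s | ∑ i, Y (s i) ≤ 0} ≤ (∑ z, p z * exp (-t * Y z)) ^ n := by
  rw [Fintype.sum_pow]
  refine le_trans (sum_le_sum fun s hs => ?_)
    (sum_le_sum_of_subset_of_nonneg (subset_univ _) fun s _ _ => ?_)
  · have hexp : 1 ≤ exp (-t * ∑ i, Y (s i)) :=
      one_le_exp (mul_nonneg_of_nonpos_of_nonpos (by linarith) (mem_filter.1 hs).2)
    rw [prod_mul_distrib, ← exp_sum, ← mul_sum]
    exact le_mul_of_one_le_right (prod_nonneg fun i _ => hp0 _) hexp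
  · exact prod_nonneg fun i _ => mul_nonneg (hp0 _) (exp_pos _).le

lemma sum_mul_exp_mul_le [Fintype T] (hp0 : ∀ z, 0 ≤ p z) (hp1 : ∑ z, p z = 1)
    {Y : T → ℝ} {t : ℝ} (hY : ∀ z, |t * Y z| ≤ 1) :
    ∑ z, p z * exp (t * Y z) ≤ exp (t * ∑ z, p z * Y z + t ^ 2 * ∑ z, p z * Y z ^ 2) := by
  calc ∑ z, p z * exp (t * Y z) ≤ ∑ z, p z * (1 + t * Y z + (t * Y z) ^ 2) := by
        refine sum_le_sum fun z _ => mul_le_mul_of_nonneg_left ?_ (hp0 z)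
        linarith [(abs_le.1 (abs_exp_sub_one_sub_id_le (hY z))).2]
    _ = ∑ z, p z + t * ∑ z, p z * Y z + t ^ 2 * ∑ z, p z * Y z ^ 2 := by
        rw [mul_sum, mul_sum, ← sum_add_distrib, ← sum_add_distrib]
        exact sum_congr rfl fun z _ => by ring
    _ ≤ _ := by
        rw [hp1]
        linarith [add_one_le_exp (t * ∑ z, p z * Y z + t ^ 2 * ∑ z, p z * Y z ^ 2)]

/-- Chernoff with exponent `1/8`: the moment generating function of `-Y/8` is at most
`exp (-E Y / 8 + E Y² / 64) ≤ exp (-E Y / 16)`. -/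
lemma piProb_sum_nonpos_le_exp [Fintype T] (hp0 : ∀ z, 0 ≤ p z) (hp1 : ∑ z, p z = 1)
    {Y : T → ℝ} (hY : ∀ z, |Y z| ≤ 1) (hvar : ∑ z, p z * Y z ^ 2 ≤ 4 * ∑ z, p z * Y z) :
    piProb p n {s | ∑ i, Y (s i) ≤ 0} ≤ exp (-(n * ∑ z, p z * Y z) / 16) := by
  have hY' : ∀ z, |-(1 / 8) * Y z| ≤ 1 := fun z => by
    rw [abs_mul, abs_of_neg (by norm_num : -(1 / 8 : ℝ) < 0)]
    linarith [hY z]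
  calc piProb p n {s | ∑ i, Y (s i) ≤ 0} ≤ (∑ z, p z * exp (-(1 / 8) * Y z)) ^ n :=
        piProb_sum_nonpos_le_pow hp0 Y (by norm_num)
    _ ≤ exp (-(∑ z, p z * Y z) / 16) ^ n := by
        gcongr
        · exact sum_nonneg fun z _ => mul_nonneg (hp0 z) (exp_pos _).le
        · refine (sum_mul_exp_mul_le hp0 hp1 hY').trans (exp_le_exp.2 ?_)
          linarith
    _ = exp (-(n * ∑ z, p z * Y z) / 16) := by rw [← exp_nat_mul]; ring_nf

end IndependentDraws

section LeastSquares

lemma sum_mul_sq_sub_sub_sq_sub {V : Type*} [Fintype V] {q r : V → ℝ} (a b : ℝ)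
    (hq1 : ∑ w, q w = 1) (hb : ∑ w, q w * r w = b) :
    ∑ w, q w * ((a - r w) ^ 2 - (b - r w) ^ 2) = (a - b) ^ 2 := by
  have hpoint : ∀ w, q w * ((a - r w) ^ 2 - (b - r w) ^ 2)
      = (a - b) * (a + b) * q w - 2 * (a - b) * (q w * r w) := fun w => by ring
  simp only [hpoint, sum_sub_distrib, ← mul_sum, hq1, hb]
  ring

lemma sq_sq_sub_sub_sq_sub_le {a b r : ℝ} (ha : a ∈ Set.Icc (0 : ℝ) 1)
    (hb : b ∈ Set.Icc (0 : ℝ) 1) (hr : r ∈ Set.Icc (0 : ℝ) 1) :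
    ((a - r) ^ 2 - (b - r) ^ 2) ^ 2 ≤ 4 * (a - b) ^ 2 := by
  obtain ⟨ha0, ha1⟩ := ha
  obtain ⟨hb0, hb1⟩ := hb
  obtain ⟨hr0, hr1⟩ := hr
  have hfactor : ((a - r) ^ 2 - (b - r) ^ 2) ^ 2 = (a - b) ^ 2 * (a + b - 2 * r) ^ 2 := by ring
  have hsum : (a + b - 2 * r) ^ 2 ≤ 4 := by nlinarith
  rw [hfactor]
  nlinarith [sq_nonneg (a - b)]

lemma abs_sq_sub_sub_sq_sub_le_one {a b r : ℝ} (ha : a ∈ Set.Icc (0 : ℝ) 1)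
    (hb : b ∈ Set.Icc (0 : ℝ) 1) (hr : r ∈ Set.Icc (0 : ℝ) 1) :
    |(a - r) ^ 2 - (b - r) ^ 2| ≤ 1 := by
  obtain ⟨ha0, ha1⟩ := ha
  obtain ⟨hb0, hb1⟩ := hb
  obtain ⟨hr0, hr1⟩ := hr
  rw [abs_le]
  constructor <;> nlinarith

variable {X A V : Type*} {Dx : X → ℝ} {k : X → A → ℝ} {Dr : X → V → ℝ}

def sampleWeight (Dx : X → ℝ) (k : X → A → ℝ) (Dr : X → V → ℝ) (z : X × A × V) : ℝ :=
  Dx z.1 * k z.1 z.2.1 * Dr z.1 z.2.2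

def excessLoss (rv : V → A → ℝ) (f g : X → A → ℝ) (z : X × A × V) : ℝ :=
  (f z.1 z.2.1 - rv z.2.2 z.2.1) ^ 2 - (g z.1 z.2.1 - rv z.2.2 z.2.1) ^ 2

lemma sampleWeight_nonneg (hDx0 : ∀ x, 0 ≤ Dx x) (hk0 : ∀ x a, 0 ≤ k x a)
    (hDr0 : ∀ x w, 0 ≤ Dr x w) (z : X × A × V) : 0 ≤ sampleWeight Dx k Dr z :=
  mul_nonneg (mul_nonneg (hDx0 _) (hk0 _ _)) (hDr0 _ _)

variable [Fintype X] [Fintype A] [Fintype V]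

lemma sum_sampleWeight_mul (g : X → A → V → ℝ) :
    ∑ z, sampleWeight Dx k Dr z * g z.1 z.2.1 z.2.2
      = ∑ x, ∑ a, Dx x * k x a * ∑ w, Dr x w * g x a w := by
  simp only [Fintype.sum_prod_type, sampleWeight, mul_sum, mul_assoc]

lemma sum_sampleWeight (hDx1 : ∑ x, Dx x = 1) (hk1 : ∀ x, ∑ a, k x a = 1)
    (hDr1 : ∀ x, ∑ w, Dr x w = 1) : ∑ z, sampleWeight Dx k Dr z = 1 := by
  have h := sum_sampleWeight_mul (Dx := Dx) (k := k) (Dr := Dr) fun _ _ _ => 1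
  simpa only [mul_one, hDr1, ← mul_sum, hk1, hDx1] using h

/-- The cross term `E[(f - g) (g - r)]` vanishes by realizability. -/
lemma sum_sampleWeight_mul_excessLoss {rv : V → A → ℝ} {g : X → A → ℝ}
    (hDr1 : ∀ x, ∑ w, Dr x w = 1) (hreal : ∀ x a, ∑ w, Dr x w * rv w a = g x a)
    (f : X → A → ℝ) :
    ∑ z, sampleWeight Dx k Dr z * excessLoss rv f g z
      = ∑ x, ∑ a, Dx x * k x a * (f x a - g x a) ^ 2 := by
  simp only [excessLoss,
    sum_sampleWeight_mul fun x a w => (f x a - rv w a) ^ 2 - (g x a - rv w a) ^ 2,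
    sum_mul_sq_sub_sub_sq_sub _ _ (hDr1 _) (hreal _ _)]

lemma sum_sampleWeight_mul_excessLoss_sq_le {rv : V → A → ℝ} {f g : X → A → ℝ}
    (hDx0 : ∀ x, 0 ≤ Dx x) (hk0 : ∀ x a, 0 ≤ k x a) (hDr0 : ∀ x w, 0 ≤ Dr x w)
    (hDr1 : ∀ x, ∑ w, Dr x w = 1) (hreal : ∀ x a, ∑ w, Dr x w * rv w a = g x a)
    (hr : ∀ w a, rv w a ∈ Set.Icc (0 : ℝ) 1) (hf : ∀ x a, f x a ∈ Set.Icc (0 : ℝ) 1)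
    (hg : ∀ x a, g x a ∈ Set.Icc (0 : ℝ) 1) :
    ∑ z, sampleWeight Dx k Dr z * excessLoss rv f g z ^ 2
      ≤ 4 * ∑ z, sampleWeight Dx k Dr z * excessLoss rv f g z := by
  calc ∑ z, sampleWeight Dx k Dr z * excessLoss rv f g z ^ 2
      ≤ ∑ z, sampleWeight Dx k Dr z * (4 * (f z.1 z.2.1 - g z.1 z.2.1) ^ 2) :=
        sum_le_sum fun z _ => mul_le_mul_of_nonneg_left (sq_sq_sub_sub_sq_sub_le (hf _ _) (hg _ _)
          (hr _ _)) (sampleWeight_nonneg hDx0 hk0 hDr0 z)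
    _ = 4 * ∑ z, sampleWeight Dx k Dr z * excessLoss rv f g z := by
        rw [sum_sampleWeight_mul_excessLoss hDr1 hreal,
          sum_sampleWeight_mul fun x a _ => 4 * (f x a - g x a) ^ 2, mul_sum]
        simp only [← sum_mul, hDr1, one_mul, mul_sum]
        exact sum_congr rfl fun x _ => sum_congr rfl fun a _ => by ring

end LeastSquares

/-- Finite-class least-squares excess risk bound. With a finite
realizable class `F` (via `φ : F → X → A → ℝ`, with `f* = φ fstar`), `n` i.i.d.
samples `(x_i, a_i, r_i)` drawn as `x ∼ Dx`, `a ∼ k(·|x)`, reward vector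
`r ∼ Dr(·|x)` (so `a` and `r` are conditionally independent given `x`) with
observed reward `r_i = r(a_i) ∈ [0,1]`, and `f̂` any empirical squared-loss
minimizer over `F`, with probability at least `1 − δ` over the `n` samples,
`E_{x,a}[(f̂(x,a) − f*(x,a))²] ≤ 25·log(|F|/δ)/n`. -/
theorem stmt10 {X A V F : Type*} [Fintype X] [Fintype A] [Fintype V] [Fintype F]
    (n : ℕ) (hn : 0 < n) (δ : ℝ) (hδ0 : 0 < δ) (hδ1 : δ ≤ 1)
    (Dx : X → ℝ) (k : X → A → ℝ) (Dr : X → V → ℝ) (rv : V → A → ℝ)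
    (hDx0 : ∀ x, 0 ≤ Dx x) (hDx1 : ∑ x, Dx x = 1)
    (hk0 : ∀ x a, 0 ≤ k x a) (hk1 : ∀ x, ∑ a, k x a = 1)
    (hDr0 : ∀ x w, 0 ≤ Dr x w) (hDr1 : ∀ x, ∑ w, Dr x w = 1)
    (hr : ∀ w a, rv w a ∈ Set.Icc (0:ℝ) 1)
    (φ : F → X → A → ℝ) (hφ : ∀ g x a, φ g x a ∈ Set.Icc (0:ℝ) 1)
    (fstar : F)
    (hreal : ∀ x a, ∑ w, Dr x w * rv w a = φ fstar x a)
    (fhat : (Fin n → X × A × V) → F)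
    (hfhat : ∀ (s : Fin n → X × A × V) (g : F),
      ∑ i, (φ (fhat s) (s i).1 (s i).2.1 - rv (s i).2.2 (s i).2.1) ^ 2
        ≤ ∑ i, (φ g (s i).1 (s i).2.1 - rv (s i).2.2 (s i).2.1) ^ 2) :
    1 - δ ≤
      ∑ s : Fin n → X × A × V,
        (if (∑ x, ∑ a, Dx x * k x a * (φ (fhat s) x a - φ fstar x a) ^ 2)
              ≤ 25 * Real.log (Fintype.card F / δ) / n
         then ∏ i, Dx (s i).1 * k (s i).1 (s i).2.1 * Dr (s i).1 (s i).2.2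
         else 0) := by
  set C := Real.log (Fintype.card F / δ)
  set p := sampleWeight Dx k Dr
  set L : F → X × A × V → ℝ := fun g => excessLoss rv (φ g) (φ fstar)
  have hp0 : ∀ z, 0 ≤ p z := sampleWeight_nonneg hDx0 hk0 hDr0
  have hp1 : ∑ z, p z = 1 := sum_sampleWeight hDx1 hk1 hDr1
  have hcard : (0 : ℝ) < Fintype.card F := by exact_mod_cast Fintype.card_pos_iff.2 ⟨fstar⟩
  have hC : 0 ≤ C := Real.log_nonneg ((one_le_div hδ0).2 (hδ1.trans (by exact_mod_cast hcard)))
  have herm : ∀ s, ∑ i, L (fhat s) (s i) ≤ 0 := fun s => by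
    simpa [L, excessLoss, sum_sub_distrib] using hfhat s fstar
  have htail : ∀ g, 25 * C / n < ∑ x, ∑ a, Dx x * k x a * (φ g x a - φ fstar x a) ^ 2 →
      piProb p n {s | ∑ i, L g (s i) ≤ 0} ≤ δ / Fintype.card F := by
    intro g hg
    rw [← sum_sampleWeight_mul_excessLoss hDr1 hreal, div_lt_iff₀ (by exact_mod_cast hn)] at hg
    calc piProb p n {s | ∑ i, L g (s i) ≤ 0} ≤ exp (-(n * ∑ z, p z * L g z) / 16) :=
          piProb_sum_nonpos_le_exp hp0 hp1
            (fun z => abs_sq_sub_sub_sq_sub_le_one (hφ _ _ _) (hφ _ _ _) (hr _ _))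
            (sum_sampleWeight_mul_excessLoss_sq_le hDx0 hk0 hDr0 hDr1 hreal hr (hφ g) (hφ fstar))
      _ ≤ exp (-C) := exp_le_exp.2 (by linarith)
      _ = δ / Fintype.card F := by rw [exp_neg, exp_log (by positivity), inv_div]
  rw [← sum_filter]
  change 1 - δ ≤ piProb p n _
  rw [piProb_filter_eq_one_sub hp1]
  refine sub_le_sub_left ?_ 1
  calc _ ≤ Fintype.card F * (δ / Fintype.card F) :=
        piProb_le_card_mul hp0 _ fhat (fun g => {s | ∑ i, L g (s i) ≤ 0})
          (fun s _ => mem_filter.2 ⟨mem_univ s, herm s⟩)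
          (fun s hs => htail _ (not_le.1 (mem_filter.1 hs).2)) (div_nonneg hδ0.le hcard.le)
    _ = δ := mul_div_cancel₀ _ hcard.ne'
end
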